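/- Let H be a real Hilbert space, C ⊆ H nonempty closed convex, α > 0, and A : C → H α-inverse-strongly monotone. Let u ∈ SOL(C,A), x ∈ C, τ > 0, and assume ‖A x‖ ≤ ‖A x − A u‖. If y ∈ C satisfies ⟨(x − τ A x) − y, w − y⟩ ≤ 0 for all w ∈ C (i.e., y is the metric projection of x − τ A x onto C), then ‖u − y‖² ≤ ‖u − x‖² + 2τ(2τ − α)‖A x − A u‖². In particular, if 0 < τ < α/2 then ‖u − y‖ ≤ ‖u − x‖. -/

import Mathlib

/-!
The variational inequality characterising `y` gives `‖u - y‖ ≤ ‖u - (x - τ • A x)‖`. Expanding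
the right-hand side, the cross term `-2τ⟪A x, x - u⟫` is at most `-2τα‖A x - A u‖²` by inverse
strong monotonicity together with `⟪A u, x - u⟫ ≥ 0`, and the quadratic term `τ²‖A x‖²` is at
most `τ²‖A x - A u‖²` by hypothesis.
-/

open scoped InnerProductSpace

section RealInnerProductSpace

variable {E : Type*} [SeminormedAddCommGroup E] [InnerProductSpace ℝ E]

theorem norm_sub_sq_le_of_inner_nonpos {u y z : E} (h : ⟪z - y, u - y⟫_ℝ ≤ 0) :
    ‖u - y‖ ^ 2 ≤ ‖u - z‖ ^ 2 := by
  have hsplit : u - z = (u - y) - (z - y) := by abel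
  rw [hsplit, norm_sub_sq_real (u - y) (z - y), real_inner_comm]
  nlinarith [sq_nonneg ‖z - y‖]

theorem norm_sub_sub_smul_sq (u x v : E) (τ : ℝ) :
    ‖u - (x - τ • v)‖ ^ 2 = ‖u - x‖ ^ 2 - 2 * τ * ⟪v, x - u⟫_ℝ + τ ^ 2 * ‖v‖ ^ 2 := by
  have hsplit : u - (x - τ • v) = -((x - u) - τ • v) := by abel
  rw [hsplit, norm_neg, norm_sub_sq_real, norm_sub_rev x u, inner_smul_right, norm_smul,
    Real.norm_eq_abs, mul_pow, sq_abs, real_inner_comm]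
  ring

end RealInnerProductSpace

theorem projection_step_estimate_general
    {H : Type*} [NormedAddCommGroup H] [InnerProductSpace ℝ H]
    (C : Set H)
    (A : H → H) (α : ℝ)
    (hA : ∀ x ∈ C, ∀ y ∈ C, α * ‖A x - A y‖ ^ 2 ≤ ⟪A x - A y, x - y⟫_ℝ)
    (u : H) (hu : u ∈ C) (hsol : ∀ w ∈ C, 0 ≤ ⟪A u, w - u⟫_ℝ)
    (x : H) (hx : x ∈ C) (τ : ℝ) (hτ : 0 < τ)
    (hbound : ‖A x‖ ≤ ‖A x - A u‖)
    (y : H) (hproj : ∀ w ∈ C, ⟪(x - τ • A x) - y, w - y⟫_ℝ ≤ 0) :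
    ‖u - y‖ ^ 2 ≤ ‖u - x‖ ^ 2 + 2 * τ * (2 * τ - α) * ‖A x - A u‖ ^ 2 ∧
    (τ < α / 2 → ‖u - y‖ ≤ ‖u - x‖) := by
  have hstep : ‖u - y‖ ^ 2 ≤ ‖u - x‖ ^ 2 - 2 * τ * ⟪A x, x - u⟫_ℝ + τ ^ 2 * ‖A x‖ ^ 2 :=
    (norm_sub_sq_le_of_inner_nonpos (hproj u hu)).trans_eq (norm_sub_sub_smul_sq u x (A x) τ)
  have hcoercive : α * ‖A x - A u‖ ^ 2 ≤ ⟪A x, x - u⟫_ℝ := by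
    have hism := hA x hx u hu
    rw [inner_sub_left] at hism
    linarith [hsol x hx]
  have hbound_sq : ‖A x‖ ^ 2 ≤ ‖A x - A u‖ ^ 2 := pow_le_pow_left₀ (norm_nonneg _) hbound 2
  have hmain : ‖u - y‖ ^ 2 ≤ ‖u - x‖ ^ 2 + 2 * τ * (2 * τ - α) * ‖A x - A u‖ ^ 2 := by
    nlinarith [mul_le_mul_of_nonneg_left hcoercive hτ.le,
      mul_le_mul_of_nonneg_left hbound_sq (sq_nonneg τ), sq_nonneg τ, sq_nonneg ‖A x - A u‖]
  refine ⟨hmain, fun hτα => ?_⟩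
  have hcorrection : 2 * τ * (2 * τ - α) * ‖A x - A u‖ ^ 2 ≤ 0 :=
    mul_nonpos_of_nonpos_of_nonneg
      (mul_nonpos_of_nonneg_of_nonpos (by positivity) (by linarith)) (sq_nonneg _)
  exact (pow_le_pow_iff_left₀ (norm_nonneg _) (norm_nonneg _) two_ne_zero).mp
    (by linarith)

/-- In a real Hilbert space, let `A : C → H` be `α`-inverse-strongly monotone,
`u ∈ SOL(C,A)`, `x ∈ C`, `τ > 0` with `‖A x‖ ≤ ‖A x − A u‖`, and let `y` be the
metric projection of `x − τ A x` onto `C`. Then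
`‖u − y‖² ≤ ‖u − x‖² + 2τ(2τ − α)‖A x − A u‖²`; in particular, if `τ < α/2` then
`‖u − y‖ ≤ ‖u − x‖`. -/
theorem projection_step_estimate
    {H : Type*} [NormedAddCommGroup H] [InnerProductSpace ℝ H] [CompleteSpace H]
    (C : Set H) (hCne : C.Nonempty) (hCcl : IsClosed C) (hCcv : Convex ℝ C)
    (A : H → H) (α : ℝ) (hα : 0 < α)
    (hA : ∀ x ∈ C, ∀ y ∈ C, α * ‖A x - A y‖ ^ 2 ≤ ⟪A x - A y, x - y⟫_ℝ)
    (u : H) (hu : u ∈ C) (hsol : ∀ w ∈ C, 0 ≤ ⟪A u, w - u⟫_ℝ)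
    (x : H) (hx : x ∈ C) (τ : ℝ) (hτ : 0 < τ)
    (hbound : ‖A x‖ ≤ ‖A x - A u‖)
    (y : H) (hy : y ∈ C) (hproj : ∀ w ∈ C, ⟪(x - τ • A x) - y, w - y⟫_ℝ ≤ 0) :
    ‖u - y‖ ^ 2 ≤ ‖u - x‖ ^ 2 + 2 * τ * (2 * τ - α) * ‖A x - A u‖ ^ 2 ∧
    (τ < α / 2 → ‖u - y‖ ≤ ‖u - x‖) :=
  projection_step_estimate_general C A α hA u hu hsol x hx τ hτ hbound y hproj
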